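/- arXiv:2211.16872 — 6 statements merged into one kernel-verified Lean document; each statement's English description precedes it below -/
import Mathlib

section
/- Let K be a compact convex subset of a locally convex topological real vector space, and let Aff_c(K) ⊆ C(K,ℝ) be the subspace of continuous affine real-valued functions on K. Then the weak topology on C(K,ℝ) (induced by the dual, i.e., by Radon measures on K) restricted to Aff_c(K) coincides with the topology of pointwise convergence on K. -/
noncomputable section

variable {E : Type*} [AddCommGroup E] [Module ℝ E] [TopologicalSpace E]
  [IsTopologicalAddGroup E] [ContinuousSMul ℝ E]

/-- The continuous affine real-valued functions on a convex set `K`. -/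
def AffC (K : Set E) (hK : Convex ℝ K) : Type _ :=
  {f : C(K, ℝ) // ∀ (x y : K) (t : ℝ) (ht0 : 0 ≤ t) (ht1 : t ≤ 1),
    f ⟨t • (x : E) + (1 - t) • (y : E),
        hK x.2 y.2 ht0 (by linarith) (by ring)⟩ = t * f x + (1 - t) * f y}

/-!
A continuous linear functional `L` on `C(K, ℝ)` agrees on affine functions with
`f ↦ s * f x - t * f y` for some `s, t ≥ 0` and `x, y ∈ K`, so it is continuous for pointwise
convergence; conversely, point evaluations are weakly continuous.

To find `s, t, x, y`, take finitely many affine `f₁, …, fₙ`: the range `T` of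
`x ↦ (fᵢ x)ᵢ` is a compact convex subset of `ℝⁿ`, and `L (∑ cᵢ fᵢ) ≤ ‖L‖ ‖∑ cᵢ fᵢ‖` says that no
functional separates `(L fᵢ)ᵢ` from `[0, ‖L‖] • T - [0, ‖L‖] • T`, which therefore contains it.
Compactness of `[0, ‖L‖]² × K²` then yields one choice working for all affine `f`.
-/

open Set Pointwise

theorem Convex.set_smul_of_nonneg {V : Type*} [AddCommGroup V] [Module ℝ V] {S : Set ℝ}
    {T : Set V} (hS : Convex ℝ S) (hS₀ : ∀ s ∈ S, 0 ≤ s) (hT : Convex ℝ T) :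
    Convex ℝ (S • T) := by
  rintro _ ⟨s₁, hs₁, y₁, hy₁, rfl⟩ _ ⟨s₂, hs₂, y₂, hy₂, rfl⟩ a b ha hb hab
  obtain ⟨z, hz, hzeq⟩ := hT.exists_mem_add_smul_eq hy₁ hy₂
    (mul_nonneg ha (hS₀ s₁ hs₁)) (mul_nonneg hb (hS₀ s₂ hs₂))
  exact ⟨a * s₁ + b * s₂, hS hs₁ hs₂ ha hb hab, z, hz, by simp only [hzeq, smul_smul]⟩

theorem mem_Icc_smul_sub_Icc_smul_of_forall_le {V : Type*} [AddCommGroup V] [Module ℝ V]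
    [TopologicalSpace V] [IsTopologicalAddGroup V] [ContinuousSMul ℝ V]
    [LocallyConvexSpace ℝ V] [T2Space V] {T : Set V} (hTc : IsCompact T) (hTconv : Convex ℝ T)
    (hTne : T.Nonempty) {M : ℝ} (hM : 0 ≤ M) {v : V}
    (hv : ∀ (ℓ : StrongDual ℝ V) (u : ℝ), (∀ y ∈ T, M * |ℓ y| ≤ u) → ℓ v ≤ u) :
    v ∈ Icc 0 M • T - Icc 0 M • T := by
  have hconv : Convex ℝ (Icc 0 M • T) :=
    (convex_Icc 0 M).set_smul_of_nonneg (fun _ hs => hs.1) hTconv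
  have hcpt : IsCompact (Icc 0 M • T) := isCompact_Icc.smul_set hTc
  by_contra hvC
  obtain ⟨ℓ, u, hℓC, hℓv⟩ := geometric_hahn_banach_closed_point (hconv.sub hconv)
    (by simpa only [sub_eq_add_neg] using (hcpt.add hcpt.neg).isClosed) hvC
  obtain ⟨y₀, hy₀⟩ := hTne
  have hM_mem : M ∈ Icc 0 M := ⟨hM, le_rfl⟩
  have h0_mem : (0 : ℝ) ∈ Icc 0 M := ⟨le_rfl, hM⟩
  suffices ∀ y ∈ T, M * |ℓ y| ≤ u by linarith [hv ℓ u this]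
  intro y hy
  have h₁ := hℓC _ (sub_mem_sub (smul_mem_smul hM_mem hy) (smul_mem_smul h0_mem hy₀))
  have h₂ := hℓC _ (sub_mem_sub (smul_mem_smul h0_mem hy₀) (smul_mem_smul hM_mem hy))
  simp only [map_sub, map_smul, smul_eq_mul, zero_mul, sub_zero, zero_sub] at h₁ h₂
  rw [← abs_of_nonneg hM, ← abs_mul]
  exact (abs_lt.2 ⟨by linarith, h₁⟩).le

theorem ContinuousMap.strongDual_pi_apply_le {X ι : Type*} [TopologicalSpace X] [CompactSpace X]
    [Nonempty X] [Fintype ι] (L : StrongDual ℝ C(X, ℝ)) (φ : ι → C(X, ℝ))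
    (ℓ : StrongDual ℝ (ι → ℝ)) {c : ℝ} (hc : ∀ x, ‖L‖ * |ℓ (fun i => φ i x)| ≤ c) :
    ℓ (fun i => L (φ i)) ≤ c := by
  classical
  set g : C(X, ℝ) := ∑ i, ℓ (fun j => if i = j then 1 else 0) • φ i
  have hg : ∀ x, g x = ℓ (fun i => φ i x) := by
    intro x
    rw [← ℓ.coe_coe, LinearMap.pi_apply_eq_sum_univ]
    simp [g, mul_comm]
  have hLg : L g = ℓ (fun i => L (φ i)) := by
    rw [← ℓ.coe_coe, LinearMap.pi_apply_eq_sum_univ]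
    simp [g, mul_comm]
  obtain ⟨x₀, -, hx₀⟩ :=
    isCompact_univ.exists_isMaxOn univ_nonempty g.continuous.norm.continuousOn
  have hg_norm : ‖g‖ ≤ |g x₀| :=
    (ContinuousMap.norm_le _ (norm_nonneg _)).2 fun y => hx₀ (mem_univ y)
  calc ℓ (fun i => L (φ i)) = L g := hLg.symm
    _ ≤ ‖L‖ * ‖g‖ := (le_abs_self _).trans (L.le_opNorm g)
    _ ≤ ‖L‖ * |g x₀| := by gcongr
    _ ≤ c := hg x₀ ▸ hc x₀

namespace AffC

variable {F : Type*} [AddCommGroup F] [Module ℝ F] [TopologicalSpace F] {K : Set F}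
  {hK : Convex ℝ K} [CompactSpace K] [Nonempty K]

theorem exists_dual_eq_eval_sub_eval_of_finset (L : StrongDual ℝ C(K, ℝ))
    (u : Finset (AffC K hK)) :
    ∃ s ∈ Icc 0 ‖L‖, ∃ t ∈ Icc 0 ‖L‖, ∃ x y : K, ∀ f ∈ u, L f.1 = s * f.1 x - t * f.1 y := by
  set Φ : K → (u → ℝ) := fun x f => f.1.1 x
  have hΦ : Continuous Φ := continuous_pi fun f => f.1.1.continuous
  have hΦconv : Convex ℝ (range Φ) := by
    rintro _ ⟨x, rfl⟩ _ ⟨y, rfl⟩ a b ha hb hab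
    obtain rfl : b = 1 - a := by linarith
    refine ⟨⟨a • (x : F) + (1 - a) • (y : F), hK x.2 y.2 ha hb hab⟩, funext fun f => ?_⟩
    exact f.1.2 x y a ha (by linarith)
  obtain ⟨_, ⟨s, hs, _, ⟨x, rfl⟩, rfl⟩, _, ⟨t, ht, _, ⟨y, rfl⟩, rfl⟩, heq⟩ :=
    mem_Icc_smul_sub_Icc_smul_of_forall_le (isCompact_range hΦ) hΦconv (range_nonempty Φ)
      (norm_nonneg L) (v := fun f => L f.1.1) fun ℓ c hc =>
        ContinuousMap.strongDual_pi_apply_le L _ ℓ fun x => hc _ (mem_range_self x)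
  refine ⟨s, hs, t, ht, x, y, fun f hf => ?_⟩
  simpa [Φ] using (congrFun heq ⟨f, hf⟩).symm

theorem exists_dual_eq_eval_sub_eval (L : StrongDual ℝ C(K, ℝ)) :
    ∃ (s t : ℝ) (x y : K), ∀ f : AffC K hK, L f.1 = s * f.1 x - t * f.1 y := by
  let S (f : AffC K hK) : Set ((ℝ × ℝ) × K × K) :=
    {p | L f.1 = p.1.1 * f.1 p.2.1 - p.1.2 * f.1 p.2.2}
  have hS : ∀ f, IsClosed (S f) := fun f => isClosed_eq continuous_const (by fun_prop)
  have hfin : ∀ u : Finset (AffC K hK),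
      ((Icc 0 ‖L‖ ×ˢ Icc 0 ‖L‖) ×ˢ univ ∩ ⋂ f ∈ u, S f).Nonempty := by
    intro u
    obtain ⟨s, hs, t, ht, x, y, h⟩ := exists_dual_eq_eval_sub_eval_of_finset L u
    exact ⟨((s, t), x, y), ⟨⟨hs, ht⟩, trivial⟩, mem_iInter₂.2 h⟩
  obtain ⟨p, -, hp⟩ :=
    ((isCompact_Icc.prod isCompact_Icc).prod isCompact_univ).inter_iInter_nonempty S hS hfin
  exact ⟨_, _, _, _, fun f => mem_iInter.1 hp f⟩

end AffC

theorem weak_topology_eq_pointwise_on_affine_general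
    (K : Set E) (hKc : IsCompact K) (hKconv : Convex ℝ K) :
    TopologicalSpace.induced
        (fun f : AffC K hKconv => toWeakSpace ℝ C(K, ℝ) f.1) inferInstance
      = TopologicalSpace.induced
          (fun (f : AffC K hKconv) (x : K) => f.1 x) Pi.topologicalSpace := by
  have : CompactSpace K := isCompact_iff_compactSpace.mp hKc
  apply le_antisymm
  · let : TopologicalSpace (AffC K hKconv) :=
      .induced (fun f => toWeakSpace ℝ C(K, ℝ) f.1) inferInstance
    refine continuous_iff_le_induced.mp <| continuous_pi fun x => ?_
    exact (WeakBilin.eval_continuous (topDualPairing ℝ C(K, ℝ)).flip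
      (ContinuousMap.evalCLM ℝ x)).comp continuous_induced_dom
  · let : TopologicalSpace (AffC K hKconv) :=
      .induced (fun (f : AffC K hKconv) (x : K) => f.1 x) Pi.topologicalSpace
    refine continuous_iff_le_induced.mp <| WeakBilin.continuous_of_continuous_eval _ fun L => ?_
    rcases isEmpty_or_nonempty K with _ | _
    · exact continuous_of_const fun f g => congrArg L (Subsingleton.elim f.1 g.1)
    · obtain ⟨s, t, x, y, hL⟩ := AffC.exists_dual_eq_eval_sub_eval (hK := hKconv) L
      have hev : Continuous fun (f : AffC K hKconv) (x : K) => f.1 x := continuous_induced_dom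
      change Continuous fun f : AffC K hKconv => L f.1
      simp_rw [hL]
      exact (continuous_const.mul ((continuous_apply x).comp hev)).sub
        (continuous_const.mul ((continuous_apply y).comp hev))

/-- Lemma 3.6: on the space of continuous affine functions on a compact
convex set `K` (in a locally convex space), the weak topology of `C(K,ℝ)` (induced by
its topological dual, i.e. by Radon measures on `K`) coincides with the topology of
pointwise convergence on `K`. -/
theorem weak_topology_eq_pointwise_on_affine [LocallyConvexSpace ℝ E]
    (K : Set E) (hKc : IsCompact K) (hKconv : Convex ℝ K) :
    TopologicalSpace.induced
        (fun f : AffC K hKconv => toWeakSpace ℝ C(K, ℝ) f.1) inferInstance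
      = TopologicalSpace.induced
          (fun (f : AffC K hKconv) (x : K) => f.1 x) Pi.topologicalSpace :=
  weak_topology_eq_pointwise_on_affine_general K hKc hKconv
end
end

section
/- Let A be a unital C*-algebra, γ > 0, and f ∈ C([0,1]). Then there exists δ > 0 such that for all positive contractions a, b ∈ A and every tracial state τ on A with ‖a − b‖_{2,τ} < δ, one has ‖f(a) − f(b)‖_{2,τ} < γ. -/
/-
With respect to a tracial state τ, (x, y) ↦ τ(x* y) is a semi-inner product (the GNS
construction), so ‖·‖_{2,τ} is a seminorm with ‖xy‖_{2,τ} ≤ ‖x‖ ‖y‖_{2,τ}; traciality gives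
‖x*‖_{2,τ} = ‖x‖_{2,τ} and hence also ‖xy‖_{2,τ} ≤ ‖x‖_{2,τ} ‖y‖. Writing
aⁿ⁺¹ − bⁿ⁺¹ = a(aⁿ − bⁿ) + (a − b)bⁿ yields ‖aⁿ − bⁿ‖_{2,τ} ≤ n ‖a − b‖_{2,τ} for contractions,
so every polynomial is Lipschitz for ‖·‖_{2,τ}, uniformly in τ. Approximating f uniformly on
[0, 1] by a polynomial and using ‖·‖_{2,τ} ≤ ‖·‖ for the two error terms finishes the proof.
-/

noncomputable section

variable {A : Type*} [CStarAlgebra A] [PartialOrder A] [StarOrderedRing A]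

/-- A tracial state on a unital C*-algebra. -/
def IsTracialState (τ : A →ₗ[ℂ] ℂ) : Prop :=
  τ 1 = 1 ∧ (∀ a : A, 0 ≤ (τ (star a * a)).re ∧ (τ (star a * a)).im = 0) ∧
    ∀ a b : A, τ (a * b) = τ (b * a)

/-- The 2-seminorm `‖a‖_{2,τ} = τ(a*a)^{1/2}`. -/
def trNorm (τ : A →ₗ[ℂ] ℂ) (a : A) : ℝ := Real.sqrt ((τ (star a * a)).re)

open scoped ComplexOrder
open Polynomial

section

omit [PartialOrder A] [StarOrderedRing A]

lemma trNorm_nonneg (τ : A →ₗ[ℂ] ℂ) (x : A) : 0 ≤ trNorm τ x := Real.sqrt_nonneg _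

lemma trNorm_sub_comm (τ : A →ₗ[ℂ] ℂ) (x y : A) : trNorm τ (x - y) = trNorm τ (y - x) := by
  rw [trNorm, trNorm, ← neg_sub, star_neg, neg_mul_neg]

namespace IsTracialState

variable {τ : A →ₗ[ℂ] ℂ}

lemma nontrivial (hτ : IsTracialState τ) : Nontrivial A :=
  ⟨⟨1, 0, fun h => by simpa [h] using hτ.1⟩⟩

lemma trNorm_one (hτ : IsTracialState τ) : trNorm τ 1 = 1 := by
  simp [trNorm, hτ.1]

lemma trNorm_star (hτ : IsTracialState τ) (x : A) : trNorm τ (star x) = trNorm τ x := by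
  rw [trNorm, trNorm, star_star, hτ.2.2]

end IsTracialState

end

lemma spectrum_subset_Icc_of_nonneg_of_norm_le_one [Nontrivial A] {a : A} (ha : 0 ≤ a)
    (ha1 : ‖a‖ ≤ 1) : spectrum ℝ a ⊆ Set.Icc 0 1 := fun x hx =>
  ⟨spectrum_nonneg_of_nonneg ha hx,
    (Real.le_norm_self x).trans ((spectrum.norm_le_norm_of_mem hx).trans ha1)⟩

section Monotone

variable {τ : A →ₗ[ℂ] ℂ}

lemma trNorm_eq_norm_toPreGNS (hτ : Monotone τ) (x : A) :
    trNorm τ x = ‖(⟨τ, hτ⟩ : A →ₚ[ℂ] ℂ).toPreGNS x‖ := rfl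

lemma trNorm_sub_le_trNorm_sub_add_trNorm_sub (hτ : Monotone τ) (x y z : A) :
    trNorm τ (x - z) ≤ trNorm τ (x - y) + trNorm τ (y - z) := by
  simpa only [trNorm_eq_norm_toPreGNS hτ, map_sub] using norm_sub_le_norm_sub_add_norm_sub _ _ _

lemma trNorm_sum_le (hτ : Monotone τ) {ι : Type*} (s : Finset ι) (g : ι → A) :
    trNorm τ (∑ i ∈ s, g i) ≤ ∑ i ∈ s, trNorm τ (g i) := by
  simpa only [trNorm_eq_norm_toPreGNS hτ, map_sum] using norm_sum_le _ _

lemma trNorm_real_smul (hτ : Monotone τ) (c : ℝ) (x : A) :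
    trNorm τ (c • x) = |c| * trNorm τ x := by
  rw [trNorm_eq_norm_toPreGNS hτ, ← Complex.coe_smul, map_smul, norm_smul, Complex.norm_real,
    Real.norm_eq_abs, trNorm_eq_norm_toPreGNS hτ]

lemma trNorm_mul_le_left (hτ : Monotone τ) (x y : A) :
    trNorm τ (x * y) ≤ ‖x‖ * trNorm τ y := by
  have := (PositiveLinearMap.leftMulMapPreGNS ⟨τ, hτ⟩ x).le_of_opNorm_le
    (LinearMap.mkContinuous_norm_le _ (norm_nonneg x) _) (PositiveLinearMap.toPreGNS _ y)
  simpa [trNorm_eq_norm_toPreGNS hτ] using this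

end Monotone

namespace IsTracialState

variable {τ : A →ₗ[ℂ] ℂ}

lemma map_nonneg (hτ : IsTracialState τ) {x : A} (hx : 0 ≤ x) : 0 ≤ τ x := by
  obtain ⟨hre, him⟩ := hτ.2.1 (CFC.sqrt x)
  rw [(CFC.sqrt_nonneg x).isSelfAdjoint.star_eq, CFC.sqrt_mul_sqrt_self x hx] at hre him
  exact Complex.nonneg_iff.mpr ⟨hre, him.symm⟩

lemma monotone (hτ : IsTracialState τ) : Monotone τ :=
  (PositiveLinearMap.mk₀ τ fun _ => hτ.map_nonneg).monotone'

lemma trNorm_le_norm (hτ : IsTracialState τ) (x : A) : trNorm τ x ≤ ‖x‖ := by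
  simpa [hτ.trNorm_one] using trNorm_mul_le_left hτ.monotone x 1

lemma trNorm_mul_le_right (hτ : IsTracialState τ) (x y : A) :
    trNorm τ (x * y) ≤ trNorm τ x * ‖y‖ := by
  calc trNorm τ (x * y) = trNorm τ (star y * star x) := by rw [← star_mul, hτ.trNorm_star]
    _ ≤ ‖star y‖ * trNorm τ (star x) := trNorm_mul_le_left hτ.monotone _ _
    _ = trNorm τ x * ‖y‖ := by rw [norm_star, hτ.trNorm_star, mul_comm]

lemma trNorm_pow_sub_pow_le (hτ : IsTracialState τ) {a b : A} (ha : ‖a‖ ≤ 1) (hb : ‖b‖ ≤ 1)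
    (n : ℕ) : trNorm τ (a ^ n - b ^ n) ≤ n * trNorm τ (a - b) := by
  have := hτ.nontrivial
  induction n with
  | zero => simp [trNorm]
  | succ n ih =>
    have hbn : ‖b ^ n‖ ≤ 1 := (norm_pow_le b n).trans (pow_le_one₀ (norm_nonneg b) hb)
    calc trNorm τ (a ^ (n + 1) - b ^ (n + 1))
        ≤ trNorm τ (a ^ (n + 1) - a * b ^ n) + trNorm τ (a * b ^ n - b ^ (n + 1)) :=
          trNorm_sub_le_trNorm_sub_add_trNorm_sub hτ.monotone _ _ _
      _ = trNorm τ (a * (a ^ n - b ^ n)) + trNorm τ ((a - b) * b ^ n) := by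
          rw [pow_succ', pow_succ', mul_sub, sub_mul, ← pow_succ', pow_succ]
      _ ≤ ‖a‖ * trNorm τ (a ^ n - b ^ n) + trNorm τ (a - b) * ‖b ^ n‖ :=
          add_le_add (trNorm_mul_le_left hτ.monotone _ _) (hτ.trNorm_mul_le_right _ _)
      _ ≤ 1 * (n * trNorm τ (a - b)) + trNorm τ (a - b) * 1 := by
          gcongr <;> exact trNorm_nonneg τ _
      _ = (n + 1 : ℕ) * trNorm τ (a - b) := by push_cast; ring

lemma trNorm_aeval_sub_aeval_le (hτ : IsTracialState τ) {a b : A} (ha : ‖a‖ ≤ 1)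
    (hb : ‖b‖ ≤ 1) (p : ℝ[X]) :
    trNorm τ (aeval a p - aeval b p) ≤
      (∑ i ∈ Finset.range (p.natDegree + 1), |p.coeff i| * i) * trNorm τ (a - b) := by
  rw [aeval_eq_sum_range, aeval_eq_sum_range, ← Finset.sum_sub_distrib, Finset.sum_mul]
  refine (trNorm_sum_le hτ.monotone _ _).trans (Finset.sum_le_sum fun i _ => ?_)
  rw [← smul_sub, trNorm_real_smul hτ.monotone, mul_assoc]
  exact mul_le_mul_of_nonneg_left (hτ.trNorm_pow_sub_pow_le ha hb i) (abs_nonneg _)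

lemma trNorm_aeval_sub_cfc_le (hτ : IsTracialState τ) {c : A} (hc : IsSelfAdjoint c)
    {s : Set ℝ} (hcs : spectrum ℝ c ⊆ s) {f : ℝ → ℝ} (hf : ContinuousOn f s) (p : ℝ[X])
    {ε : ℝ} (hε : 0 ≤ ε) (hpf : ∀ x ∈ s, |p.eval x - f x| ≤ ε) :
    trNorm τ (aeval c p - cfc f c) ≤ ε := by
  rw [← cfc_polynomial p c, ← cfc_sub _ _ c p.continuous.continuousOn (hf.mono hcs)]
  exact (hτ.trNorm_le_norm _).trans (norm_cfc_le hε fun x hx => hpf x (hcs hx))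

end IsTracialState

/-- Lemma 4.1(1): for `γ > 0` and `f ∈ C([0,1])` there is `δ > 0` such
that for all positive contractions `a, b` and every tracial state `τ` with
`‖a − b‖_{2,τ} < δ`, one has `‖f(a) − f(b)‖_{2,τ} < γ`. -/
theorem trNorm_cfc_continuity (γ : ℝ) (hγ : 0 < γ)
    (f : ℝ → ℝ) (hf : ContinuousOn f (Set.Icc (0 : ℝ) 1)) :
    ∃ δ > (0 : ℝ), ∀ a b : A, 0 ≤ a → 0 ≤ b → ‖a‖ ≤ 1 → ‖b‖ ≤ 1 →
      ∀ τ : A →ₗ[ℂ] ℂ, IsTracialState τ → trNorm τ (a - b) < δ →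
        trNorm τ (cfc f a - cfc f b) < γ := by
  obtain ⟨p, hp⟩ := exists_polynomial_near_of_continuousOn 0 1 f hf (γ / 4) (by positivity)
  set M := ∑ i ∈ Finset.range (p.natDegree + 1), |p.coeff i| * i
  have hM : 0 ≤ M := Finset.sum_nonneg fun i _ => by positivity
  refine ⟨γ / (2 * (M + 1)), by positivity, fun a b ha hb ha1 hb1 τ hτ hab => ?_⟩
  have := hτ.nontrivial
  have hfp {c : A} (hc : 0 ≤ c) (hc1 : ‖c‖ ≤ 1) : trNorm τ (aeval c p - cfc f c) ≤ γ / 4 :=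
    hτ.trNorm_aeval_sub_cfc_le hc.isSelfAdjoint
      (spectrum_subset_Icc_of_nonneg_of_norm_le_one hc hc1) hf p (by positivity)
      fun x hx => (hp x hx).le
  have hpab : M * trNorm τ (a - b) < γ / 2 := calc
    M * trNorm τ (a - b) ≤ (M + 1) * trNorm τ (a - b) := by nlinarith [trNorm_nonneg τ (a - b)]
    _ < (M + 1) * (γ / (2 * (M + 1))) := by gcongr
    _ = γ / 2 := by field_simp
  calc trNorm τ (cfc f a - cfc f b)
      ≤ trNorm τ (aeval a p - cfc f a) + trNorm τ (aeval a p - aeval b p) +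
          trNorm τ (aeval b p - cfc f b) := by
        rw [trNorm_sub_comm τ (aeval a p)]
        linarith [trNorm_sub_le_trNorm_sub_add_trNorm_sub hτ.monotone (cfc f a) (aeval a p) (cfc f b),
          trNorm_sub_le_trNorm_sub_add_trNorm_sub hτ.monotone (aeval a p) (aeval b p) (cfc f b)]
    _ < γ := by
        linarith [hfp ha ha1, hfp hb hb1, hτ.trNorm_aeval_sub_aeval_le ha1 hb1 p]
end
end

section
/- Let n ∈ ℕ, let G be a group and H ≤ G a subgroup with weak n-paradoxical towers. Then G has weak n-paradoxical towers. -/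
/-- A group `G` has weak `n`-paradoxical towers if for every `m` there are a finite
subset `D ⊆ G` with `|D| ≥ m`, subsets `K₁,…,Kₙ ⊆ G` and elements `g₁,…,gₙ ∈ G` such
that for each `j` the translates `{d·Kⱼ}_{d∈D}` are pairwise disjoint, and
`⋃ⱼ gⱼ·Kⱼ = G`. -/
def HasWeakParadoxicalTowers (G : Type*) [Group G] (n : ℕ) : Prop :=
  ∀ m : ℕ, ∃ (D : Finset G) (K : Fin n → Set G) (g : Fin n → G),
    m ≤ D.card ∧
    (∀ j, (D : Set G).PairwiseDisjoint fun d => (fun k => d * k) '' K j) ∧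
    (⋃ j, (fun k => g j * k) '' K j) = Set.univ

/-- Proposition 4.14: weak `n`-paradoxical towers pass from a subgroup
to the ambient group. -/
theorem hasWeakParadoxicalTowers_of_subgroup {G : Type*} [Group G] (n : ℕ)
    (H : Subgroup G) (h : HasWeakParadoxicalTowers H n) :
    HasWeakParadoxicalTowers G n := by
  intro m
  obtain ⟨D, K, g, hcard, hdisj, hcov⟩ := h m
  letI S := QuotientGroup.rightRel H
  -- representatives of right cosets
  set rep : Quotient S → G := Quotient.out with hrep
  refine ⟨D.map ⟨Subtype.val, Subtype.val_injective⟩,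
    fun j => {x : G | ∃ k : H, k ∈ K j ∧ ∃ a : Quotient S, x = (k : G) * rep a},
    fun j => (g j : G), ?_, ?_, ?_⟩
  · simpa using hcard
  · intro j
    intro d hd d' hd' hne
    simp only [Finset.coe_map, Set.mem_image, Finset.mem_coe] at hd hd'
    obtain ⟨e, he, rfl⟩ := hd
    obtain ⟨e', he', rfl⟩ := hd'
    have hne' : e ≠ e' := by
      intro hh; exact hne (by rw [hh])
    have := hdisj j he he' hne'
    simp only [Function.onFun] at this ⊢
    rw [Set.disjoint_left] at this ⊢
    rintro x ⟨y, ⟨k, hk, a, rfl⟩, rfl⟩ ⟨y', ⟨k', hk', a', ha'⟩, hy'⟩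
    -- (e : G) * (k * rep a) = (e' : G) * (k' * rep a')
    have heq : (e : G) * ((k : G) * rep a) = (e' : G) * ((k' : G) * rep a') := by
      rw [← ha']; exact hy'.symm
    have heq' : ((e : G) * (k : G)) * rep a = ((e' : G) * (k' : G)) * rep a' := by
      simpa [mul_assoc] using heq
    -- deduce rep a = rep a'
    have h3 : rep a' = ((e' : G) * (k' : G))⁻¹ * (((e : G) * (k : G)) * rep a) := by
      rw [heq', inv_mul_cancel_left]
    have hrel : Setoid.r (rep a) (rep a') := by
      rw [QuotientGroup.rightRel_apply]
      have hmemH : ((e' : G) * (k' : G))⁻¹ * ((e : G) * (k : G)) ∈ H :=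
        H.mul_mem (H.inv_mem (H.mul_mem e'.2 k'.2)) (H.mul_mem e.2 k.2)
      have : rep a' * (rep a)⁻¹ = ((e' : G) * (k' : G))⁻¹ * ((e : G) * (k : G)) := by
        rw [h3]; group
      rw [this]; exact hmemH
    have haa : a = a' := by
      have := Quotient.sound hrel
      simpa [hrep] using this
    subst haa
    -- then e * k = e' * k' in H
    have hEK : (e : G) * (k : G) = (e' : G) * (k' : G) := mul_right_cancel heq'
    have hEKH : e * k = e' * k' := Subtype.ext hEK
    exact this ⟨k, hk, rfl⟩ ⟨k', hk', hEKH.symm⟩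
  · ext x
    simp only [Set.mem_iUnion, Set.mem_image, Set.mem_univ, iff_true]
    -- x * (rep ⟦x⟧)⁻¹ ∈ H
    have hx : x * (rep (Quotient.mk S x))⁻¹ ∈ H := by
      have : Setoid.r (rep (Quotient.mk S x)) x := Quotient.exact (Quotient.out_eq _)
      rw [QuotientGroup.rightRel_apply] at this
      exact this
    have hmem : (⟨x * (rep (Quotient.mk S x))⁻¹, hx⟩ : H) ∈ ⋃ j, (fun k => g j * k) '' K j :=
      Set.eq_univ_iff_forall.mp hcov _
    simp only [Set.mem_iUnion, Set.mem_image] at hmem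
    obtain ⟨j, k, hk, hj⟩ := hmem
    refine ⟨j, (k : G) * rep (Quotient.mk S x), ⟨k, hk, _, rfl⟩, ?_⟩
    have : (g j : G) * (k : G) = x * (rep (Quotient.mk S x))⁻¹ := congrArg Subtype.val hj
    rw [← mul_assoc, this]
    simp
end

section
/- The free group F₂ on two generators has weak 2-paradoxical towers: for every m ∈ ℕ there exist a finite subset D ⊆ F₂ with |D| ≥ m, subsets K₁, K₂ ⊆ F₂, and elements g₁, g₂ ∈ F₂ such that the translates {dK₁ : d ∈ D} are pairwise disjoint, the translates {dK₂ : d ∈ D} are pairwise disjoint, and g₁K₁ ∪ g₂K₂ = F₂. -/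
open FreeGroup

private lemma letter_mul_toWord (i : Fin 2) (c : Bool) (x : FreeGroup (Fin 2))
    (h : x.toWord.head? ≠ some (i, !c)) :
    (FreeGroup.mk [(i, c)] * x).toWord = (i, c) :: x.toWord := by
  conv_lhs => rw [show x = FreeGroup.mk x.toWord from (FreeGroup.mk_toWord).symm]
  rw [FreeGroup.mul_mk, FreeGroup.toWord_mk]
  have hred : reduce x.toWord = x.toWord := FreeGroup.reduce_toWord x
  show reduce ((i, c) :: x.toWord) = (i, c) :: x.toWord
  rw [FreeGroup.reduce.cons, hred]
  cases hx : x.toWord with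
  | nil => rfl
  | cons hd tl =>
    have hhd : hd ≠ (i, !c) := by
      intro he; apply h; rw [hx, he]; rfl
    obtain ⟨a1, a2⟩ := hd
    have : ¬((i, c).1 = a1 ∧ (i, c).2 = !a2) := by
      rintro ⟨h1, h2⟩
      simp only at h1 h2
      apply hhd
      subst h1; subst h2
      simp
    simp only [this, if_false]

private lemma pow_mul_head {n : ℕ} (hn : 0 < n) (x : FreeGroup (Fin 2)) (c : Bool)
    (hx : x.toWord.head? = some (1, c)) :
    ((FreeGroup.of (0 : Fin 2)) ^ n * x).toWord.head? = some (0, true) := by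
  induction n with
  | zero => omega
  | succ n ih =>
    have hof : FreeGroup.of (0 : Fin 2) = FreeGroup.mk [((0 : Fin 2), true)] := rfl
    rcases Nat.eq_zero_or_pos n with h0 | hpos
    · subst h0
      rw [pow_one, hof, letter_mul_toWord _ _ _ (by rw [hx]; simp)]
      rfl
    · have ihh := ih hpos
      rw [pow_succ', mul_assoc, hof,
        letter_mul_toWord _ _ _ (by rw [← hof, ihh]; simp)]
      rfl

private lemma pow_inj : Function.Injective (fun k : ℕ => (FreeGroup.of (0 : Fin 2)) ^ k) := by
  intro i j h
  have := congrArg FreeGroup.toWord h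
  simp only [FreeGroup.toWord_of_pow] at this
  simpa using congrArg List.length this

private lemma key_eq (c c' : Bool) {i j : ℕ} {x y : FreeGroup (Fin 2)}
    (hx : x.toWord.head? = some (1, c)) (hy : y.toWord.head? = some (1, c'))
    (h : (FreeGroup.of (0 : Fin 2)) ^ i * x = (FreeGroup.of (0 : Fin 2)) ^ j * y) :
    i = j := by
  rcases lt_trichotomy i j with hlt | heq | hgt
  · exfalso
    have hx' : x = (FreeGroup.of (0 : Fin 2)) ^ (j - i) * y := by
      have : (FreeGroup.of (0 : Fin 2)) ^ j = (FreeGroup.of (0 : Fin 2)) ^ i *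
          (FreeGroup.of (0 : Fin 2)) ^ (j - i) := by
        rw [← pow_add]; congr 1; omega
      rw [this, mul_assoc] at h
      exact mul_left_cancel h
    have := pow_mul_head (n := j - i) (by omega) y c' hy
    rw [← hx'] at this
    rw [hx] at this
    simp at this
  · exact heq
  · exfalso
    have hy' : y = (FreeGroup.of (0 : Fin 2)) ^ (i - j) * x := by
      have : (FreeGroup.of (0 : Fin 2)) ^ i = (FreeGroup.of (0 : Fin 2)) ^ j *
          (FreeGroup.of (0 : Fin 2)) ^ (i - j) := by
        rw [← pow_add]; congr 1; omega
      rw [this, mul_assoc] at h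
      exact (mul_left_cancel h).symm
    have := pow_mul_head (n := i - j) (by omega) x c hx
    rw [← hy'] at this
    rw [hy] at this
    simp at this

/-- the free group `F₂` on two generators has weak 2-paradoxical towers:
for every `m` there are a finite `D ⊆ F₂` with `|D| ≥ m`, subsets `K₁, K₂ ⊆ F₂` and
`g₁, g₂ ∈ F₂` such that for each `i` the translates `{d·Kᵢ}_{d∈D}` are pairwise
disjoint and `g₁K₁ ∪ g₂K₂ = F₂`. -/
theorem freeGroup_two_hasWeakParadoxicalTowers (m : ℕ) :
    ∃ (D : Finset (FreeGroup (Fin 2))) (K₁ K₂ : Set (FreeGroup (Fin 2)))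
      (g₁ g₂ : FreeGroup (Fin 2)),
      m ≤ D.card ∧
      ((D : Set (FreeGroup (Fin 2))).PairwiseDisjoint fun d => (fun k => d * k) '' K₁) ∧
      ((D : Set (FreeGroup (Fin 2))).PairwiseDisjoint fun d => (fun k => d * k) '' K₂) ∧
      ((fun k => g₁ * k) '' K₁) ∪ ((fun k => g₂ * k) '' K₂) = Set.univ := by
  classical
  set a : FreeGroup (Fin 2) := FreeGroup.of 0 with ha
  refine ⟨(Finset.range m).image (fun k => a ^ k),
    {x | x.toWord.head? = some (1, true)}, {x | x.toWord.head? = some (1, false)},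
    FreeGroup.mk [((1 : Fin 2), false)], FreeGroup.mk [((1 : Fin 2), true)], ?_, ?_, ?_, ?_⟩
  · rw [Finset.card_image_of_injective _ pow_inj, Finset.card_range]
  · -- disjointness for K₁
    intro d hd e he hne
    simp only [Finset.coe_image, Set.mem_image, Finset.mem_coe, Finset.mem_range] at hd he
    obtain ⟨i, _, rfl⟩ := hd
    obtain ⟨j, _, rfl⟩ := he
    rw [Function.onFun, Set.disjoint_left]
    rintro z ⟨x, hx, rfl⟩ ⟨y, hy, hxy⟩
    exact hne (by rw [key_eq true true hx hy hxy.symm])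
  · intro d hd e he hne
    simp only [Finset.coe_image, Set.mem_image, Finset.mem_coe, Finset.mem_range] at hd he
    obtain ⟨i, _, rfl⟩ := hd
    obtain ⟨j, _, rfl⟩ := he
    rw [Function.onFun, Set.disjoint_left]
    rintro z ⟨x, hx, rfl⟩ ⟨y, hy, hxy⟩
    exact hne (by rw [key_eq false false hx hy hxy.symm])
  · -- union is everything
    ext x
    simp only [Set.mem_union, Set.mem_image, Set.mem_setOf_eq, Set.mem_univ, iff_true]
    have hinv1 : FreeGroup.mk [((1 : Fin 2), false)] * FreeGroup.mk [((1 : Fin 2), true)] = 1 := by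
      rw [FreeGroup.mul_mk, FreeGroup.one_eq_mk]
      exact FreeGroup.reduce.exact (by decide)
    have hinv2 : FreeGroup.mk [((1 : Fin 2), true)] * FreeGroup.mk [((1 : Fin 2), false)] = 1 := by
      rw [FreeGroup.mul_mk, FreeGroup.one_eq_mk]
      exact FreeGroup.reduce.exact (by decide)
    by_cases h : x.toWord.head? = some (1, false)
    · right
      refine ⟨FreeGroup.mk [((1 : Fin 2), false)] * x, ?_, ?_⟩
      · show (FreeGroup.mk [((1 : Fin 2), false)] * x).toWord.head? = some (1, false)
        rw [letter_mul_toWord _ _ _ (by rw [h]; decide)]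
        rfl
      · rw [← mul_assoc, hinv2, one_mul]
    · left
      refine ⟨FreeGroup.mk [((1 : Fin 2), true)] * x, ?_, ?_⟩
      · show (FreeGroup.mk [((1 : Fin 2), true)] * x).toWord.head? = some (1, true)
        rw [letter_mul_toWord _ _ _ (by simpa using h)]
        rfl
      · rw [← mul_assoc, hinv1, one_mul]
end

section
/- Every group containing a subgroup isomorphic to the free group F₂ has weak paradoxical towers. -/
open FreeGroup List

namespace WPT

lemma replicate_append_cancel {β : Type*} (u : β) :
    ∀ (i j : ℕ) (l₁ l₂ : List β), l₁.head? ≠ some u → l₂.head? ≠ some u →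
      List.replicate i u ++ l₁ = List.replicate j u ++ l₂ → i = j ∧ l₁ = l₂ := by
  intro i
  induction i with
  | zero =>
    intro j l₁ l₂ h1 h2 h
    cases j with
    | zero => simpa using h
    | succ j =>
      simp only [List.replicate_zero, List.replicate_succ, List.nil_append,
        List.cons_append] at h
      exact absurd (by rw [h]; rfl) h1
  | succ i ih =>
    intro j l₁ l₂ h1 h2 h
    cases j with
    | zero =>
      simp only [List.replicate_zero, List.replicate_succ, List.nil_append,
        List.cons_append] at h
      exact absurd (by rw [← h]; rfl) h2
    | succ j =>
      simp only [List.replicate_succ, List.cons_append, List.cons.injEq, true_and] at h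
      obtain ⟨hij, hl⟩ := ih j l₁ l₂ h1 h2 h
      exact ⟨by omega, hl⟩

lemma toWord_mul' {α : Type*} [DecidableEq α] (x y : FreeGroup α) :
    (x * y).toWord = reduce (x.toWord ++ y.toWord) := by
  conv_lhs => rw [← FreeGroup.mk_toWord (x := x), ← FreeGroup.mk_toWord (x := y)]
  rw [FreeGroup.mul_mk, FreeGroup.toWord_mk]

local notation "F₂" => FreeGroup (Fin 2)

noncomputable abbrev a : F₂ := FreeGroup.of 0
noncomputable abbrev b : F₂ := FreeGroup.of 1

lemma toWord_bpow_mul (i : ℕ) (w : F₂) (t : Bool)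
    (hw : w.toWord.head? = some ((0 : Fin 2), t)) :
    (b ^ i * w).toWord = List.replicate i ((1 : Fin 2), true) ++ w.toWord := by
  rw [toWord_mul', FreeGroup.toWord_of_pow]
  induction i with
  | zero => simp [FreeGroup.reduce_toWord]
  | succ i ih =>
    rw [List.replicate_succ, List.cons_append, FreeGroup.reduce.cons, ih]
    cases i with
    | zero =>
      simp only [List.replicate_zero, List.nil_append]
      obtain ⟨hd, tl, hwd⟩ : ∃ hd tl, w.toWord = hd :: tl := by
        cases hcw : w.toWord with
        | nil => rw [hcw] at hw; simp at hw
        | cons hd tl => exact ⟨hd, tl, rfl⟩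
      rw [hwd] at hw ⊢
      simp only [List.head?_cons, Option.some.injEq] at hw
      subst hw
      norm_num
    | succ i =>
      simp [List.replicate_succ]

lemma toWord_ainv_mul (w : F₂) (hw : w.toWord.head? ≠ some ((0 : Fin 2), true)) :
    (a⁻¹ * w).toWord = ((0 : Fin 2), false) :: w.toWord := by
  have hai : (a⁻¹).toWord = [((0 : Fin 2), false)] := by
    rw [FreeGroup.toWord_inv, FreeGroup.toWord_of]
    rfl
  rw [toWord_mul', hai]
  simp only [List.cons_append, List.nil_append]
  rw [FreeGroup.reduce.cons, FreeGroup.reduce_toWord]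
  cases hcw : w.toWord with
  | nil => rfl
  | cons hd tl =>
    have hnc : ¬(((0 : Fin 2), false).1 = hd.1 ∧ ((0 : Fin 2), false).2 = !hd.2) := by
      rintro ⟨h1, h2⟩
      apply hw
      rw [hcw]
      have : hd = ((0 : Fin 2), true) := by
        obtain ⟨x, s⟩ := hd
        simp only at h1 h2
        simp [← h1, show s = true by simpa using h2.symm]
      simp [this]
    simp only [if_neg hnc]

lemma f2_towers : ∀ m : ℕ, ∃ (D : Finset F₂) (K : Fin 2 → Set F₂) (g : Fin 2 → F₂),
    m ≤ D.card ∧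
    (∀ j, (D : Set F₂).PairwiseDisjoint fun d => (fun k => d * k) '' K j) ∧
    (⋃ j, (fun k => g j * k) '' K j) = Set.univ := by
  intro m
  classical
  refine ⟨(Finset.range m).image (fun i => b ^ i),
    fun j => {w : F₂ | w.toWord.head? = some ((0 : Fin 2), decide (j = 0))}, ![1, a],
    ?_, ?_, ?_⟩
  · rw [Finset.card_image_of_injective _ ?_, Finset.card_range]
    intro i j hij
    have := congrArg (fun x : F₂ => x.toWord.length) hij
    simpa [FreeGroup.toWord_of_pow] using this
  · intro j
    rintro d₁ hd₁ d₂ hd₂ hne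
    simp only [Finset.coe_image, Set.mem_image, Finset.mem_coe, Finset.mem_range] at hd₁ hd₂
    obtain ⟨i₁, -, rfl⟩ := hd₁
    obtain ⟨i₂, -, rfl⟩ := hd₂
    apply Set.disjoint_left.mpr
    rintro x ⟨w₁, hw₁, rfl⟩ ⟨w₂, hw₂, hx⟩
    simp only [Set.mem_setOf_eq] at hw₁ hw₂
    have h1 := toWord_bpow_mul i₁ w₁ _ hw₁
    have h2 := toWord_bpow_mul i₂ w₂ _ hw₂
    change b ^ i₂ * w₂ = b ^ i₁ * w₁ at hx
    have heq : List.replicate i₁ ((1 : Fin 2), true) ++ w₁.toWord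
        = List.replicate i₂ ((1 : Fin 2), true) ++ w₂.toWord := by
      rw [← h1, ← h2]
      exact congrArg FreeGroup.toWord hx.symm
    obtain ⟨hij, -⟩ := replicate_append_cancel _ i₁ i₂ _ _
      (by rw [hw₁]; simp) (by rw [hw₂]; simp) heq
    exact hne (by rw [hij])
  · ext x
    simp only [Set.mem_iUnion, Set.mem_image, Set.mem_setOf_eq, Set.mem_univ, iff_true]
    by_cases hx : x.toWord.head? = some ((0 : Fin 2), true)
    · exact ⟨0, x, by simpa using hx, by simp⟩
    · refine ⟨1, a⁻¹ * x, ?_, ?_⟩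
      · rw [toWord_ainv_mul x hx]
        simp
      · show a * (a⁻¹ * x) = x
        group

end WPT

/-- Corollary 4.15: every group containing a copy of the free group
`F₂` has weak paradoxical towers. -/
theorem hasWeakParadoxicalTowers_of_free_subgroup {G : Type*} [Group G]
    (ι : FreeGroup (Fin 2) →* G) (hι : Function.Injective ι) :
    ∃ n : ℕ, HasWeakParadoxicalTowers G n := by
  classical
  refine ⟨2, fun m => ?_⟩
  obtain ⟨D, K, g, hcard, hdisj, hcover⟩ := WPT.f2_towers m
  let s : Setoid G := QuotientGroup.rightRel ι.range
  refine ⟨D.image ι, fun j => {x : G | ∃ k ∈ K j, ∃ q : Quotient s, x = ι k * q.out},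
    fun j => ι (g j), ?_, ?_, ?_⟩
  · rwa [Finset.card_image_of_injective _ hι]
  · intro j
    rintro d₁ hd₁ d₂ hd₂ hne
    simp only [Finset.coe_image, Set.mem_image, Finset.mem_coe] at hd₁ hd₂
    obtain ⟨e₁, he₁, rfl⟩ := hd₁
    obtain ⟨e₂, he₂, rfl⟩ := hd₂
    have hne' : e₁ ≠ e₂ := fun h => hne (by rw [h])
    apply Set.disjoint_left.mpr
    rintro x ⟨y₁, ⟨k₁, hk₁, q₁, rfl⟩, hxy₁⟩ ⟨y₂, ⟨k₂, hk₂, q₂, rfl⟩, hxy₂⟩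
    change ι e₁ * (ι k₁ * q₁.out) = x at hxy₁
    change ι e₂ * (ι k₂ * q₂.out) = x at hxy₂
    have heq : ι (e₁ * k₁) * q₁.out = ι (e₂ * k₂) * q₂.out := by
      rw [_root_.map_mul, _root_.map_mul, mul_assoc, mul_assoc, hxy₁, hxy₂]
    have hq : q₁ = q₂ := by
      have hrel : q₂.out ≈ q₁.out := by
        have hmem : q₁.out * q₂.out⁻¹ ∈ ι.range := by
          refine MonoidHom.mem_range.mpr ⟨(e₁ * k₁)⁻¹ * (e₂ * k₂), ?_⟩
          have h1' : q₁.out = (ι (e₁ * k₁))⁻¹ * (ι (e₂ * k₂) * q₂.out) := by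
            rw [← heq]; group
          rw [h1', _root_.map_mul, _root_.map_inv, _root_.map_mul, _root_.map_mul]
          group
        exact QuotientGroup.rightRel_apply.mpr hmem
      rw [← Quotient.out_eq (s := s) q₁, ← Quotient.out_eq (s := s) q₂]
      exact (Quotient.sound hrel).symm
    subst hq
    have hkk : e₂ * k₂ = e₁ * k₁ := hι (mul_right_cancel heq.symm)
    exact Set.disjoint_left.mp (hdisj j he₁ he₂ hne')
      ⟨k₁, hk₁, rfl⟩ ⟨k₂, hk₂, hkk⟩
  · ext x
    simp only [Set.mem_iUnion, Set.mem_image, Set.mem_setOf_eq, Set.mem_univ, iff_true]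
    set q : Quotient s := Quotient.mk s x with hq
    have hrel : q.out ≈ x := Quotient.exact (Quotient.out_eq q)
    have hrel' : x * q.out⁻¹ ∈ ι.range := QuotientGroup.rightRel_apply.mp hrel
    obtain ⟨f, hf⟩ := MonoidHom.mem_range.mp hrel'
    have hfx : f ∈ ⋃ j, (fun k => g j * k) '' K j := by rw [hcover]; trivial
    simp only [Set.mem_iUnion, Set.mem_image] at hfx
    obtain ⟨j, k, hk, hgk⟩ := hfx
    refine ⟨j, ι k * q.out, ⟨k, hk, q, rfl⟩, ?_⟩
    show ι (g j) * (ι k * q.out) = x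
    rw [← mul_assoc, ← _root_.map_mul, hgk, hf]
    group
end

section
/- Let G be a group with weak paradoxical towers. Then G is not amenable. More precisely, if G has weak n-paradoxical towers and μ is a finitely additive left-invariant probability measure on all subsets of G, one obtains a contradiction. -/
/-- Lemma 4.13: a group with weak paradoxical towers is not amenable:
a finitely additive, left-invariant probability measure on all subsets of `G`
yields a contradiction. -/
theorem not_amenable_of_hasWeakParadoxicalTowers {G : Type*} [Group G] (n : ℕ)
    (h : HasWeakParadoxicalTowers G n) (μ : Set G → ℝ)
    (hpos : ∀ s, 0 ≤ μ s) (huniv : μ Set.univ = 1)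
    (hadd : ∀ s t : Set G, Disjoint s t → μ (s ∪ t) = μ s + μ t)
    (hinv : ∀ (g : G) (s : Set G), μ ((fun k => g * k) '' s) = μ s) :
    False := by
  classical
  have hempty : μ ∅ = 0 := by
    have := hadd ∅ ∅ (by simp)
    simp only [Set.union_empty] at this
    linarith
  -- monotonicity
  have hmono : ∀ s t : Set G, s ⊆ t → μ s ≤ μ t := by
    intro s t hst
    have : μ t = μ s + μ (t \ s) := by
      rw [← hadd s (t \ s) Set.disjoint_sdiff_right, Set.union_diff_cancel hst]
    linarith [hpos (t \ s)]
  -- subadditivity for two sets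
  have hsub2 : ∀ s t : Set G, μ (s ∪ t) ≤ μ s + μ t := by
    intro s t
    have h1 : s ∪ t = s ∪ (t \ s) := by rw [Set.union_diff_self]
    rw [h1, hadd s (t \ s) Set.disjoint_sdiff_right]
    have := hmono (t \ s) t Set.diff_subset
    linarith
  -- finite subadditivity over a Finset
  have hsubF : ∀ (S : Finset (Fin n)) (f : Fin n → Set G),
      μ (⋃ i ∈ S, f i) ≤ ∑ i ∈ S, μ (f i) := by
    intro S f
    induction S using Finset.induction_on with
    | empty => simp [hempty]
    | @insert a s hx ih =>
      rw [Finset.set_biUnion_insert, Finset.sum_insert hx]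
      calc μ (f a ∪ ⋃ i ∈ s, f i) ≤ μ (f a) + μ (⋃ i ∈ s, f i) := hsub2 _ _
        _ ≤ _ := by linarith [ih]
  -- finite additivity over a pairwise disjoint Finset-indexed family
  have haddF : ∀ (S : Finset G) (f : G → Set G),
      (S : Set G).PairwiseDisjoint f → μ (⋃ d ∈ S, f d) = ∑ d ∈ S, μ (f d) := by
    intro S f hdisj
    induction S using Finset.induction_on with
    | empty => simp [hempty]
    | @insert a s hx ih =>
      rw [Finset.set_biUnion_insert, Finset.sum_insert hx]
      have hd : Disjoint (f a) (⋃ d ∈ s, f d) := by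
        apply Set.disjoint_iUnion₂_right.2
        intro d hd
        exact hdisj (by simp) (by simp [hd]) (fun hda => hx (hda ▸ hd))
      rw [hadd _ _ hd, ih (hdisj.subset (by simp [Set.subset_def]; exact fun x hx => Or.inr hx))]
  obtain ⟨D, K, g, hcard, hdisj, hcover⟩ := h (n + 1)
  -- each translate sum is bounded by 1
  have hKle : ∀ j, (D.card : ℝ) * μ (K j) ≤ 1 := by
    intro j
    have heq := haddF D (fun d => (fun k => d * k) '' K j) (hdisj j)
    have hsum : ∑ d ∈ D, μ ((fun k => d * k) '' K j) = D.card * μ (K j) := by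
      rw [Finset.sum_congr rfl fun d _ => hinv d (K j), Finset.sum_const,
        nsmul_eq_mul]
    have hle1 : μ (⋃ d ∈ D, (fun k => d * k) '' K j) ≤ 1 := by
      rw [← huniv]; exact hmono _ _ (Set.subset_univ _)
    rw [heq, hsum] at hle1
    exact hle1
  -- 1 ≤ sum of μ (K j)
  have h1 : (1 : ℝ) ≤ ∑ j : Fin n, μ (K j) := by
    have hu : μ (⋃ j, (fun k => g j * k) '' K j) = 1 := by rw [hcover, huniv]
    have hle : μ (⋃ j, (fun k => g j * k) '' K j)
        ≤ ∑ j : Fin n, μ ((fun k => g j * k) '' K j) := by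
      have := hsubF Finset.univ (fun j => (fun k => g j * k) '' K j)
      simpa using this
    simp only [hinv] at hle
    linarith
  have hcard' : (n + 1 : ℝ) ≤ (D.card : ℝ) := by exact_mod_cast hcard
  have hsum2 : (D.card : ℝ) * ∑ j : Fin n, μ (K j) ≤ n := by
    rw [Finset.mul_sum]
    calc ∑ j : Fin n, (D.card : ℝ) * μ (K j) ≤ ∑ _j : Fin n, (1 : ℝ) :=
          Finset.sum_le_sum fun j _ => hKle j
      _ = n := by simp
  have hDS : (D.card : ℝ) ≤ (D.card : ℝ) * ∑ j : Fin n, μ (K j) :=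
    le_mul_of_one_le_right (by positivity) h1
  linarith
end
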